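/- Let L/K be a finite Galois field extension, G a finite group acting on L through a surjection onto Gal(L/K) with kernel H, with |G| invertible in L. For V, W ∈ Rep_K(G) (finite-dimensional K-linear representations of G), one has dim_K Hom_{L⋊G}(L ⊗_K V, L ⊗_K W) = dim_K Hom_{K[H]}(V|_H, W|_H). -/

import Mathlib

/-!
An `L`-linear map out of `L ⊗_K V` is determined by its restriction to `V`, so
`Hom_{L⋊G}(L ⊗ V, L ⊗ W) = Hom_G(V, L ⊗ W)`. A normal basis `(τ θ)_τ` of `L/K` identifies
`L ⊗_K W` with the functions `Gal(L/K) → W`, on which `G` acts by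
`(g · F)(τ) = g (F ((σ g)⁻¹ τ))`; since `Gal(L/K) ≅ G / H`, this is the representation coinduced
from `W|_H`, and Frobenius reciprocity (evaluation at `1`) gives `Hom_G(V, L ⊗ W) ≅ Hom_H(V, W)`.
-/

open scoped TensorProduct

variable {K L : Type*} [Field K] [Field L] [Algebra K L]
variable {G : Type*} [Group G]
variable {V W : Type*} [AddCommGroup V] [Module K V] [AddCommGroup W] [Module K W]

/-- The `K`-submodule of `Hom_{L⋊G}(L ⊗_K V, L ⊗_K W)`: `L`-linear maps commuting with
the diagonal semilinear `G`-action `g · (λ ⊗ v) = g(λ) ⊗ g(v)`. -/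
noncomputable def homLG (σ : G →* (L ≃ₐ[K] L))
    (ρV : G →* (V ≃ₗ[K] V)) (ρW : G →* (W ≃ₗ[K] W)) :
    Submodule K ((L ⊗[K] V) →ₗ[K] (L ⊗[K] W)) where
  carrier := {f | (∀ (a : L) (x : L ⊗[K] V), f (a • x) = a • f x) ∧
    ∀ (g : G) (x : L ⊗[K] V),
      f (TensorProduct.map (σ g).toLinearMap (ρV g).toLinearMap x)
        = TensorProduct.map (σ g).toLinearMap (ρW g).toLinearMap (f x)}
  add_mem' := by
    intro f g hf hg
    exact ⟨fun a x => by simp [hf.1, hg.1], fun g' x => by simp [hf.2, hg.2]⟩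
  zero_mem' := ⟨fun a x => by simp, fun g x => by simp⟩
  smul_mem' := by
    intro c f hf
    refine ⟨fun a x => ?_, fun g x => ?_⟩
    · rw [LinearMap.smul_apply, LinearMap.smul_apply, hf.1, smul_comm]
    · simp [hf.2]

/-- The `K`-submodule `Hom_{K[H]}(V, W)` of `H`-equivariant `K`-linear maps,
`H = ker σ`. -/
def homKH (σ : G →* (L ≃ₐ[K] L))
    (ρV : G →* (V ≃ₗ[K] V)) (ρW : G →* (W ≃ₗ[K] W)) :
    Submodule K (V →ₗ[K] W) where
  carrier := {f | ∀ h ∈ σ.ker, ∀ v : V, f (ρV h v) = ρW h (f v)}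
  add_mem' := by intro f g hf hg h hh v; simp [hf h hh, hg h hh]
  zero_mem' := by intro h hh v; simp
  smul_mem' := by intro c f hf h hh v; simp [hf h hh]

section EquivariantMaps

variable {X Y : Type*} [AddCommGroup X] [Module K X] [AddCommGroup Y] [Module K Y]

def equivariantMaps (ρ : G →* (V ≃ₗ[K] V)) (π : G → X →ₗ[K] X) : Submodule K (V →ₗ[K] X) where
  carrier := {φ | ∀ g v, φ (ρ g v) = π g (φ v)}
  add_mem' hφ hψ g v := by simp [hφ g v, hψ g v]
  zero_mem' g v := by simp
  smul_mem' c φ hφ g v := by simp [hφ g v]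

def equivariantMapsCongr (ρ : G →* (V ≃ₗ[K] V)) {π : G → X →ₗ[K] X} {π' : G → Y →ₗ[K] Y}
    (e : X ≃ₗ[K] Y) (he : ∀ g x, e (π g x) = π' g (e x)) :
    equivariantMaps ρ π ≃ₗ[K] equivariantMaps ρ π' where
  toFun φ := ⟨e.toLinearMap ∘ₗ φ, fun g v => by simp [φ.2 g v, he]⟩
  invFun ψ := ⟨e.symm.toLinearMap ∘ₗ ψ, fun g v => by
    simp [ψ.2 g v, e.symm_apply_eq, he]⟩
  map_add' _ _ := by ext; simp
  map_smul' _ _ := by ext; simp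
  left_inv φ := by ext; simp
  right_inv ψ := by ext; simp

end EquivariantMaps

section ExtensionOfScalars

noncomputable def tensorAction (σ : G →* (L ≃ₐ[K] L)) (ρ : G →* (W ≃ₗ[K] W)) (g : G) :
    L ⊗[K] W →ₗ[K] L ⊗[K] W :=
  TensorProduct.map (σ g).toLinearMap (ρ g).toLinearMap

theorem tensorAction_tmul (σ : G →* (L ≃ₐ[K] L)) (ρ : G →* (W ≃ₗ[K] W)) (g : G) (a : L)
    (w : W) : tensorAction σ ρ g (a ⊗ₜ w) = σ g a ⊗ₜ ρ g w :=
  rfl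

theorem tensorAction_smul (σ : G →* (L ≃ₐ[K] L)) (ρ : G →* (W ≃ₗ[K] W)) (g : G) (a : L)
    (x : L ⊗[K] W) : tensorAction σ ρ g (a • x) = σ g a • tensorAction σ ρ g x := by
  induction x using TensorProduct.induction_on with
  | zero => simp
  | tmul b w => simp [TensorProduct.smul_tmul', tensorAction_tmul]
  | add x y hx hy => rw [smul_add, map_add, map_add, hx, hy, smul_add]

noncomputable def homLGEquivEquivariantMaps (σ : G →* (L ≃ₐ[K] L))
    (ρV : G →* (V ≃ₗ[K] V)) (ρW : G →* (W ≃ₗ[K] W)) :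
    homLG σ ρV ρW ≃ₗ[K] equivariantMaps ρV (tensorAction σ ρW) where
  toFun F := ⟨F.1 ∘ₗ TensorProduct.mk K L V 1, fun g v => by
    have h := F.2.2 g (1 ⊗ₜ v)
    rwa [TensorProduct.map_tmul, AlgEquiv.toLinearMap_apply, map_one] at h⟩
  invFun φ := ⟨(φ.1.liftBaseChange L).restrictScalars K,
    fun a x => (φ.1.liftBaseChange L).map_smul a x, fun g x => by
      induction x using TensorProduct.induction_on with
      | zero => simp
      | tmul a v =>
        change φ.1.liftBaseChange L (σ g a ⊗ₜ ρV g v)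
          = tensorAction σ ρW g (φ.1.liftBaseChange L (a ⊗ₜ v))
        rw [LinearMap.liftBaseChange_tmul, LinearMap.liftBaseChange_tmul, tensorAction_smul,
          φ.2 g v]
      | add x y hx hy => simp only [map_add, hx, hy]⟩
  map_add' _ _ := rfl
  map_smul' _ _ := rfl
  left_inv F := by
    ext a v
    simpa [TensorProduct.smul_tmul'] using (F.2.1 a (1 ⊗ₜ v)).symm
  right_inv φ := by ext; simp

end ExtensionOfScalars

section TensorCoordinates

def coindAction {Γ : Type*} [Group Γ] (σ : G →* Γ) (ρ : G →* (W ≃ₗ[K] W)) (g : G) :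
    (Γ → W) →ₗ[K] (Γ → W) :=
  LinearMap.pi fun τ => (ρ g).toLinearMap ∘ₗ LinearMap.proj ((σ g)⁻¹ * τ)

theorem coindAction_apply {Γ : Type*} [Group Γ] (σ : G →* Γ) (ρ : G →* (W ≃ₗ[K] W)) (g : G)
    (F : Γ → W) (τ : Γ) : coindAction σ ρ g F τ = ρ g (F ((σ g)⁻¹ * τ)) :=
  rfl

theorem Module.Basis.repr_algEquiv_apply (b : Module.Basis (L ≃ₐ[K] L) K L)
    (hb : ∀ τ δ, τ (b δ) = b (τ * δ)) (τ : L ≃ₐ[K] L) (x : L) (δ : L ≃ₐ[K] L) :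
    b.repr (τ x) δ = b.repr x (τ⁻¹ * δ) := by
  have h : b.coord δ ∘ₗ τ.toLinearMap = b.coord (τ⁻¹ * δ) :=
    b.ext fun ε => by
      classical
      simp [hb, Finsupp.single_apply, eq_inv_mul_iff_mul_eq]
  exact LinearMap.congr_fun h x

variable [FiniteDimensional K L] (b : Module.Basis (L ≃ₐ[K] L) K L)

open scoped Classical in
noncomputable def tensorEquivPi : L ⊗[K] W ≃ₗ[K] ((L ≃ₐ[K] L) → W) :=
  TensorProduct.equivFinsuppOfBasisLeft b ≪≫ₗ Finsupp.linearEquivFunOnFinite K W _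

open scoped Classical in
theorem tensorEquivPi_tmul (a : L) (w : W) (τ : L ≃ₐ[K] L) :
    tensorEquivPi b (a ⊗ₜ w) τ = b.repr a τ • w :=
  TensorProduct.equivFinsuppOfBasisLeft_apply_tmul_apply b a w τ

theorem tensorEquivPi_tensorAction (hb : ∀ τ δ, τ (b δ) = b (τ * δ))
    (σ : G →* (L ≃ₐ[K] L)) (ρ : G →* (W ≃ₗ[K] W)) (g : G) (x : L ⊗[K] W) :
    tensorEquivPi b (tensorAction σ ρ g x) = coindAction σ ρ g (tensorEquivPi b x) := by
  induction x using TensorProduct.induction_on with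
  | zero => simp
  | tmul a w =>
    ext τ
    rw [tensorAction_tmul, coindAction_apply, tensorEquivPi_tmul, tensorEquivPi_tmul,
      b.repr_algEquiv_apply hb, map_smul]
  | add x y hx hy => simp only [map_add, hx, hy]

end TensorCoordinates

section FrobeniusReciprocity

variable {σ : G →* (L ≃ₐ[K] L)} {ρV : G →* (V ≃ₗ[K] V)} {ρW : G →* (W ≃ₗ[K] W)}

theorem conj_eq_of_mem_homKH {f : V →ₗ[K] W} (hf : f ∈ homKH σ ρV ρW) {a b : G}
    (hab : σ a = σ b) (v : V) : ρW a (f ((ρV a).symm v)) = ρW b (f ((ρV b).symm v)) := by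
  obtain ⟨h, hh, rfl⟩ : ∃ h ∈ σ.ker, a = b * h :=
    ⟨b⁻¹ * a, by simp [MonoidHom.mem_ker, hab], by group⟩
  have key (x : V) : ρW h (f ((ρV h).symm x)) = f x := by
    rw [← hf h hh, LinearEquiv.apply_symm_apply]
  simp [LinearEquiv.mul_eq_trans, key]

noncomputable def frobeniusReciprocity (hσ : Function.Surjective σ) :
    equivariantMaps ρV (coindAction σ ρW) ≃ₗ[K] homKH σ ρV ρW where
  toFun φ := ⟨LinearMap.proj 1 ∘ₗ φ.1, fun h hh v => by
    simp [φ.2 h v, coindAction_apply, MonoidHom.mem_ker.mp hh]⟩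
  invFun f := ⟨LinearMap.pi fun τ => (ρW (Function.surjInv hσ τ)).toLinearMap ∘ₗ f.1 ∘ₗ
      (ρV (Function.surjInv hσ τ)).symm.toLinearMap, fun g v => by
    ext τ
    have hστ : σ (Function.surjInv hσ τ) = σ (g * Function.surjInv hσ ((σ g)⁻¹ * τ)) := by
      simp [Function.surjInv_eq hσ]
    simpa [coindAction_apply, LinearEquiv.mul_eq_trans] using
      conj_eq_of_mem_homKH f.2 hστ (ρV g v)⟩
  map_add' _ _ := rfl
  map_smul' _ _ := rfl
  left_inv φ := by
    ext v τ
    have := congrFun (φ.2 (Function.surjInv hσ τ) ((ρV (Function.surjInv hσ τ)).symm v)) τ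
    simp only [LinearEquiv.apply_symm_apply, coindAction_apply, Function.surjInv_eq hσ,
      inv_mul_cancel] at this
    simp [this]
  right_inv f := by
    ext v
    simpa [LinearEquiv.one_eq_refl] using
      conj_eq_of_mem_homKH f.2 (a := Function.surjInv hσ 1) (b := 1)
        (by simp [Function.surjInv_eq hσ]) v

end FrobeniusReciprocity

theorem IsGalois.algEquiv_normalBasis_apply [FiniteDimensional K L] [IsGalois K L]
    (τ δ : L ≃ₐ[K] L) : τ (IsGalois.normalBasis K L δ) = IsGalois.normalBasis K L (τ * δ) := by
  rw [IsGalois.normalBasis_apply δ, IsGalois.normalBasis_apply (τ * δ), AlgEquiv.mul_apply]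

noncomputable def homLGEquivHomKH [FiniteDimensional K L] [IsGalois K L]
    {σ : G →* (L ≃ₐ[K] L)} (hσ : Function.Surjective σ)
    (ρV : G →* (V ≃ₗ[K] V)) (ρW : G →* (W ≃ₗ[K] W)) :
    homLG σ ρV ρW ≃ₗ[K] homKH σ ρV ρW :=
  homLGEquivEquivariantMaps σ ρV ρW ≪≫ₗ
    equivariantMapsCongr ρV _
      (tensorEquivPi_tensorAction _ IsGalois.algEquiv_normalBasis_apply σ ρW) ≪≫ₗ
    frobeniusReciprocity hσ

theorem stmt13_general [FiniteDimensional K L] [IsGalois K L]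
    (σ : G →* (L ≃ₐ[K] L)) (hσ : Function.Surjective σ)
    (ρV : G →* (V ≃ₗ[K] V)) (ρW : G →* (W ≃ₗ[K] W)) :
    Module.finrank K (homLG σ ρV ρW) = Module.finrank K (homKH σ ρV ρW) :=
  (homLGEquivHomKH hσ ρV ρW).finrank_eq

/-- Let `L/K` be a finite Galois field extension, `G` a finite group
acting on `L` through a surjection onto `Gal(L/K)` with kernel `H`, with `|G|`
invertible in `L`.  For finite-dimensional `K`-linear representations `V, W` of `G`,
`dim_K Hom_{L⋊G}(L ⊗_K V, L ⊗_K W) = dim_K Hom_{K[H]}(V|_H, W|_H)`. -/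
theorem stmt13 [FiniteDimensional K L] [IsGalois K L] [Fintype G]
    (σ : G →* (L ≃ₐ[K] L)) (hσ : Function.Surjective σ)
    (hcard : IsUnit ((Fintype.card G : L)))
    [FiniteDimensional K V] [FiniteDimensional K W]
    (ρV : G →* (V ≃ₗ[K] V)) (ρW : G →* (W ≃ₗ[K] W)) :
    Module.finrank K (homLG σ ρV ρW) = Module.finrank K (homKH σ ρV ρW) :=
  stmt13_general σ hσ ρV ρW
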